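/- arXiv:2212.08424 — 12 statements merged into one kernel-verified Lean document; each statement's English description precedes it below -/
import Mathlib

section
/- Let (X,d) be a generalised quasi-metric space. Then d is weakly weighted if and only if the following two conditions hold: (a) for every x ∈ X, the restriction of d to the connected component Q(x) is weakly weighted (i.e. there is a function w : X → ℝ with d(y,z) + w(y) = d(z,y) + w(z) for all y,z ∈ Q(x)); and (b) for every x,y ∈ X, d(x,y) = ∞ if and only if d(y,x) = ∞. -/
open scoped ENNReal

/-- A generalised quasi-metric `d` is weakly weighted iff
(a) the restriction of `d` to each connected component `Q(x)` is weakly weighted, and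
(b) `d(x,y) = ∞` iff `d(y,x) = ∞`. -/
theorem stmt_3 {X : Type*} [Nonempty X] (d : X → X → ℝ≥0∞)
    (hQM1 : ∀ x y, (d x y = 0 ∧ d y x = 0) ↔ x = y)
    (hQM2 : ∀ x y z, d x z ≤ d x y + d y z) :
    (∃ w : X → ℝ, ∀ x y, (d x y : EReal) + (w x : ℝ) = (d y x : EReal) + (w y : ℝ)) ↔
    ((∀ x : X, ∃ w : X → ℝ, ∀ y z : X,
        (d x y < ⊤ ∧ d y x < ⊤) → (d x z < ⊤ ∧ d z x < ⊤) →
        (d y z : EReal) + (w y : ℝ) = (d z y : EReal) + (w z : ℝ)) ∧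
      (∀ x y : X, d x y = ⊤ ↔ d y x = ⊤)) := by
  constructor
  · rintro ⟨w, hw⟩
    constructor
    · intro x
      exact ⟨w, fun y z _ _ => hw y z⟩
    · intro x y
      constructor
      · intro h
        by_contra hyx
        have h2 := hw x y
        rw [h, EReal.coe_ennreal_top] at h2
        have hyx' : (d y x : EReal) ≠ ⊤ := by
          simpa using hyx
        have hl : (⊤ : EReal) + (w x : ℝ) = ⊤ := EReal.top_add_of_ne_bot (by simp)
        have hr : (d y x : EReal) + (w y : ℝ) < ⊤ :=
          EReal.add_lt_top hyx' (EReal.coe_ne_top _)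
        simp only [hl] at h2
        exact hr.ne h2.symm
      · intro h
        by_contra hxy
        have h2 := hw x y
        rw [h, EReal.coe_ennreal_top] at h2
        have hxy' : (d x y : EReal) ≠ ⊤ := by simpa using hxy
        have hl : (⊤ : EReal) + (w y : ℝ) = ⊤ := EReal.top_add_of_ne_bot (by simp)
        have hr : (d x y : EReal) + (w x : ℝ) < ⊤ :=
          EReal.add_lt_top hxy' (EReal.coe_ne_top _)
        simp only [hl] at h2
        exact hr.ne h2
  · rintro ⟨ha, hb⟩
    -- equivalence relation of being in the same component
    have hrefl : ∀ x, d x x = 0 := fun x => ((hQM1 x x).mpr rfl).1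
    let r : X → X → Prop := fun x y => d x y < ⊤ ∧ d y x < ⊤
    have hr_refl : ∀ x, r x x := fun x => by simp [r, hrefl x]
    have hr_symm : ∀ {x y}, r x y → r y x := fun h => ⟨h.2, h.1⟩
    have hr_trans : ∀ {x y z}, r x y → r y z → r x z := by
      rintro x y z ⟨h1, h2⟩ ⟨h3, h4⟩
      constructor
      · exact lt_of_le_of_lt (hQM2 x y z) (ENNReal.add_lt_top.mpr ⟨h1, h3⟩)
      · exact lt_of_le_of_lt (hQM2 z y x) (ENNReal.add_lt_top.mpr ⟨h4, h2⟩)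
    let s : Setoid X := ⟨r, ⟨hr_refl, hr_symm, hr_trans⟩⟩
    let rep : X → X := fun x => (Quotient.mk s x).out
    have hrep : ∀ x, r (rep x) x := fun x => Quotient.mk_out (s := s) x
    have hrep_eq : ∀ {x y}, r x y → rep x = rep y := by
      intro x y h
      have : (Quotient.mk s x) = Quotient.mk s y := Quotient.sound h
      simp only [rep, this]
    let wf : X → X → ℝ := fun x => (ha x).choose
    have hwf : ∀ x y z, (d x y < ⊤ ∧ d y x < ⊤) → (d x z < ⊤ ∧ d z x < ⊤) →
        (d y z : EReal) + (wf x y : ℝ) = (d z y : EReal) + (wf x z : ℝ) :=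
      fun x => (ha x).choose_spec
    refine ⟨fun x => wf (rep x) x, fun x y => ?_⟩
    by_cases h : d x y = ⊤
    · have h2 : d y x = ⊤ := (hb x y).mp h
      rw [h, h2]
      rw [show ((⊤ : ℝ≥0∞) : EReal) = ⊤ by simp]
      rw [EReal.top_add_of_ne_bot (by simp), EReal.top_add_of_ne_bot (by simp)]
    · have hxy : r x y := ⟨lt_top_iff_ne_top.mpr h,
        lt_top_iff_ne_top.mpr (fun h' => h ((hb x y).mpr h'))⟩
      have heq : rep x = rep y := hrep_eq hxy
      show (d x y : EReal) + (wf (rep x) x : ℝ) = (d y x : EReal) + (wf (rep y) y : ℝ)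
      rw [heq]
      exact hwf (rep y) x y (hr_trans (hrep y) (hr_symm hxy)) (hrep y)
end

section
/- Let Γ = (V,E) be a strongly connected directed graph (for every pair of vertices x,y there is a directed path from x to y) and let d_Γ be its path quasi-metric. Then d_Γ is weakly weighted if and only if Γ is a non-directed graph, i.e., for all vertices x,y, (x,y) ∈ E if and only if (y,x) ∈ E (equivalently, d_Γ is a metric). -/
/-- `Reaches E n x y` means there is a directed path of length `n` from `x` to `y`
in the directed graph with edge relation `E`. -/
def Reaches {V : Type*} (E : V → V → Prop) (n : ℕ) (x y : V) : Prop :=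
  ∃ f : ℕ → V, f 0 = x ∧ f n = y ∧ ∀ i < n, E (f i) (f (i + 1))

open Classical in
/-- The path quasi-metric of a directed graph: `0` on the diagonal, and otherwise the
infimum of the lengths of directed paths from `x` to `y`. -/
noncomputable def pathDist {V : Type*} (E : V → V → Prop) (x y : V) : ℝ :=
  if x = y then 0 else (sInf {n : ℕ | Reaches E n x y} : ℕ)

lemma reaches_one {V : Type*} {E : V → V → Prop} {x y : V} (h : E x y) :
    Reaches E 1 x y := by
  refine ⟨fun i => if i = 0 then x else y, by simp, by simp, ?_⟩
  intro i hi
  interval_cases i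
  simpa using h

lemma reaches_zero {V : Type*} {E : V → V → Prop} {x y : V} (h : Reaches E 0 x y) :
    x = y := by
  obtain ⟨f, h0, hn, -⟩ := h
  rw [← h0, hn]

lemma reaches_rev {V : Type*} {E : V → V → Prop} (hsymm : ∀ a b, E a b ↔ E b a)
    {n : ℕ} {x y : V} (h : Reaches E n x y) : Reaches E n y x := by
  obtain ⟨f, h0, hn, he⟩ := h
  refine ⟨fun i => f (n - i), by simp [hn], by simp [h0], ?_⟩
  intro i hi
  have h1 := he (n - i - 1) (by omega)
  have e1 : n - i - 1 + 1 = n - i := by omega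
  have e2 : n - (i + 1) = n - i - 1 := by omega
  rw [e1] at h1
  simp only [e2]
  exact (hsymm _ _).mpr h1

lemma pathDist_eq_of_ne {V : Type*} {E : V → V → Prop} {x y : V} (hxy : x ≠ y) :
    pathDist E x y = (sInf {n : ℕ | Reaches E n x y} : ℕ) := by
  simp [pathDist, hxy]

lemma sInf_pos {V : Type*} {E : V → V → Prop} {x y : V} (hxy : x ≠ y)
    (h : ∃ n : ℕ, Reaches E n x y) :
    1 ≤ sInf {n : ℕ | Reaches E n x y} := by
  by_contra hlt
  push_neg at hlt
  interval_cases h0 : sInf {n : ℕ | Reaches E n x y}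
  have hmem : Reaches E (sInf {n : ℕ | Reaches E n x y}) x y := Nat.sInf_mem h
  rw [h0] at hmem
  exact hxy (reaches_zero hmem)

lemma pathDist_one_le {V : Type*} {E : V → V → Prop} {x y : V} (hxy : x ≠ y)
    (h : ∃ n : ℕ, Reaches E n x y) : 1 ≤ pathDist E x y := by
  rw [pathDist_eq_of_ne hxy]
  exact_mod_cast sInf_pos hxy h

lemma pathDist_edge {V : Type*} {E : V → V → Prop} {x y : V} (he : E x y) (hxy : x ≠ y) :
    pathDist E x y = 1 := by
  rw [pathDist_eq_of_ne hxy]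
  have h1 : sInf {n : ℕ | Reaches E n x y} ≤ 1 := Nat.sInf_le (reaches_one he)
  have h2 : 1 ≤ sInf {n : ℕ | Reaches E n x y} := sInf_pos hxy ⟨1, reaches_one he⟩
  have : sInf {n : ℕ | Reaches E n x y} = 1 := le_antisymm h1 h2
  rw [this]; norm_num

/-- For a strongly connected directed graph `Γ = (V,E)`, the path
quasi-metric `d_Γ` is weakly weighted iff `Γ` is a non-directed graph, i.e.
`(x,y) ∈ E ↔ (y,x) ∈ E` for all vertices `x, y`. -/
theorem stmt_4 {V : Type*} [Nonempty V] (E : V → V → Prop)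
    (hconn : ∀ x y : V, ∃ n : ℕ, Reaches E n x y) :
    (∃ w : V → ℝ, ∀ x y, pathDist E x y + w x = pathDist E y x + w y) ↔
    (∀ x y : V, E x y ↔ E y x) := by
  constructor
  · rintro ⟨w, hw⟩
    have key : ∀ x y : V, E x y → E y x := by
      intro x y hxy
      by_cases hx : x = y
      · subst hx; exact hxy
      set n := sInf {m : ℕ | Reaches E m y x} with hn
      obtain ⟨f, hf0, hfn, hfe⟩ : Reaches E n y x := Nat.sInf_mem (hconn y x)
      have hdyx : pathDist E y x = (n : ℝ) := pathDist_eq_of_ne (Ne.symm hx)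
      have hdxy : pathDist E x y = 1 := pathDist_edge hxy hx
      have hsum : ∑ i ∈ Finset.range n, (w (f (i + 1)) - w (f i)) = w x - w y := by
        rw [Finset.sum_range_sub (fun i => w (f i)) n, hf0, hfn]
      have hterm : ∀ i ∈ Finset.range n, w (f (i + 1)) - w (f i) ≤ 0 := by
        intro i hi
        have he := hfe i (Finset.mem_range.mp hi)
        by_cases h' : f i = f (i + 1)
        · rw [h']; simp
        · have d1 : pathDist E (f i) (f (i + 1)) = 1 := pathDist_edge he h'
          have d2 : 1 ≤ pathDist E (f (i + 1)) (f i) :=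
            pathDist_one_le (Ne.symm h') (hconn _ _)
          have h3 := hw (f i) (f (i + 1))
          linarith
      have hle : w x - w y ≤ 0 := hsum ▸ Finset.sum_nonpos hterm
      have h4 := hw y x
      rw [hdyx, hdxy] at h4
      have hn1 : (n : ℝ) ≤ 1 := by linarith
      have hnle : n ≤ 1 := by exact_mod_cast hn1
      have hnge : 1 ≤ n := sInf_pos (Ne.symm hx) (hconn y x)
      have hne : n = 1 := le_antisymm hnle hnge
      have hedge := hfe 0 (by omega)
      rw [hne] at hfn
      rw [hf0, hfn] at hedge
      exact hedge
    intro x y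
    exact ⟨key x y, key y x⟩
  · intro hsymm
    refine ⟨fun _ => 0, fun x y => ?_⟩
    have : pathDist E x y = pathDist E y x := by
      by_cases hx : x = y
      · subst hx; rfl
      · rw [pathDist_eq_of_ne hx, pathDist_eq_of_ne (Ne.symm hx)]
        congr 1
        apply congrArg
        ext n
        exact ⟨fun h => reaches_rev hsymm h, fun h => reaches_rev hsymm h⟩
    rw [this]
end

section
/- Let (X,d) be a generalised quasi-metric meet-semilattice. Then the following are equivalent: (a) d is invariant, i.e. d(x,y) = d(x, x ⊓ y) for all x,y; (b) for all x,y,z ∈ X, d(z ⊓ x, z ⊓ y) ≤ d(x,y); (c) for all x,y,z ∈ X, d(x, y ⊓ z) ≤ d(x,y) + d(x,z). -/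
open scoped ENNReal

/-! Since `x ⊓ y ≤ y` has distance zero to `y`, the triangle inequality always gives
`d x y ≤ d x (x ⊓ y)`, so invariance only asks for the reverse inequality. Both (b) and (c)
yield it by specialisation (`z = x` in (b), `y = x` in (c)). Conversely, invariance lets one
replace a target `y` by `x ⊓ y`, after which (b) and (c) are triangle inequalities through
`y`, resp. `x ⊓ y`. -/

section QuasiMetricSemilattice

variable {X : Type*} [SemilatticeInf X] (d : X → X → ℝ≥0∞)

def IsMeetInvariant : Prop := ∀ x y : X, d x y = d x (x ⊓ y)

variable {d}

theorem le_dist_inf_self (htri : ∀ x y z, d x z ≤ d x y + d y z)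
    (hle : ∀ x y, x ≤ y → d x y = 0) (x y : X) : d x y ≤ d x (x ⊓ y) :=
  calc d x y ≤ d x (x ⊓ y) + d (x ⊓ y) y := htri _ _ _
    _ = d x (x ⊓ y) := by rw [hle _ _ inf_le_right, add_zero]

theorem isMeetInvariant_of_dist_inf_le (htri : ∀ x y z, d x z ≤ d x y + d y z)
    (hle : ∀ x y, x ≤ y → d x y = 0) (h : ∀ x y : X, d x (x ⊓ y) ≤ d x y) :
    IsMeetInvariant d :=
  fun x y => le_antisymm (le_dist_inf_self htri hle x y) (h x y)

theorem IsMeetInvariant.dist_inf_inf_le (hinv : IsMeetInvariant d)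
    (htri : ∀ x y z, d x z ≤ d x y + d y z) (hle : ∀ x y, x ≤ y → d x y = 0) (x y z : X) :
    d (z ⊓ x) (z ⊓ y) ≤ d x y := by
  have htarget : d (z ⊓ x) (z ⊓ y) = d (z ⊓ x) y := by
    rw [hinv (z ⊓ x) (z ⊓ y), hinv (z ⊓ x) y, inf_assoc, inf_left_comm x z y, ← inf_assoc,
      inf_idem, inf_assoc]
  calc d (z ⊓ x) (z ⊓ y) = d (z ⊓ x) y := htarget
    _ ≤ d (z ⊓ x) x + d x y := htri _ _ _
    _ = d x y := by rw [hle _ _ inf_le_right, zero_add]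

theorem isMeetInvariant_of_dist_inf_inf_le (htri : ∀ x y z, d x z ≤ d x y + d y z)
    (hle : ∀ x y, x ≤ y → d x y = 0) (h : ∀ x y z : X, d (z ⊓ x) (z ⊓ y) ≤ d x y) :
    IsMeetInvariant d :=
  isMeetInvariant_of_dist_inf_le htri hle fun x y => by simpa using h x y x

theorem IsMeetInvariant.dist_inf_le_add (hinv : IsMeetInvariant d)
    (htri : ∀ x y z, d x z ≤ d x y + d y z) (hle : ∀ x y, x ≤ y → d x y = 0) (x y z : X) :
    d x (y ⊓ z) ≤ d x y + d x z :=
  calc d x (y ⊓ z) = d x (x ⊓ y ⊓ z) := by rw [hinv x (y ⊓ z), inf_assoc]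
    _ ≤ d x (x ⊓ y) + d (x ⊓ y) (x ⊓ y ⊓ z) := htri _ _ _
    _ = d x (x ⊓ y) + d (x ⊓ y) z := by rw [← hinv (x ⊓ y) z]
    _ ≤ d x (x ⊓ y) + (d (x ⊓ y) x + d x z) := add_le_add_right (htri _ _ _) _
    _ = d x y + d x z := by rw [hle _ _ inf_le_left, zero_add, ← hinv x y]

theorem isMeetInvariant_of_dist_inf_le_add (htri : ∀ x y z, d x z ≤ d x y + d y z)
    (hle : ∀ x y, x ≤ y → d x y = 0) (h : ∀ x y z : X, d x (y ⊓ z) ≤ d x y + d x z) :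
    IsMeetInvariant d :=
  isMeetInvariant_of_dist_inf_le htri hle fun x y =>
    calc d x (x ⊓ y) ≤ d x x + d x y := h x x y
      _ = d x y := by rw [hle x x le_rfl, zero_add]

end QuasiMetricSemilattice

theorem stmt_10_general {X : Type*} [SemilatticeInf X] (d : X → X → ℝ≥0∞)
    (hQM2 : ∀ x y z, d x z ≤ d x y + d y z)
    (hcompat : ∀ x y, d x y = 0 ↔ x ≤ y) :
    ((∀ x y : X, d x y = d x (x ⊓ y)) ↔ (∀ x y z : X, d (z ⊓ x) (z ⊓ y) ≤ d x y)) ∧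
    ((∀ x y : X, d x y = d x (x ⊓ y)) ↔ (∀ x y z : X, d x (y ⊓ z) ≤ d x y + d x z)) := by
  have hle : ∀ x y, x ≤ y → d x y = 0 := fun x y => (hcompat x y).2
  exact ⟨⟨(IsMeetInvariant.dist_inf_inf_le · hQM2 hle),
      isMeetInvariant_of_dist_inf_inf_le hQM2 hle⟩,
    ⟨(IsMeetInvariant.dist_inf_le_add · hQM2 hle),
      isMeetInvariant_of_dist_inf_le_add hQM2 hle⟩⟩

/-- For a generalised quasi-metric meet-semilattice `(X,d)`, the following
are equivalent: (a) `d` is invariant; (b) all shifts `x ↦ z ⊓ x` are non-expansive;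
(c) each `d(x,·)` is subadditive. -/
theorem stmt_10 {X : Type*} [SemilatticeInf X] [Nonempty X] (d : X → X → ℝ≥0∞)
    (hQM1 : ∀ x y, (d x y = 0 ∧ d y x = 0) ↔ x = y)
    (hQM2 : ∀ x y z, d x z ≤ d x y + d y z)
    (hcompat : ∀ x y, d x y = 0 ↔ x ≤ y) :
    ((∀ x y : X, d x y = d x (x ⊓ y)) ↔ (∀ x y z : X, d (z ⊓ x) (z ⊓ y) ≤ d x y)) ∧
    ((∀ x y : X, d x y = d x (x ⊓ y)) ↔ (∀ x y z : X, d x (y ⊓ z) ≤ d x y + d x z)) :=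
  stmt_10_general d hQM2 hcompat
end

section
/- Let (X,d) be an invariant generalised quasi-metric meet-semilattice. Then the relation ≅_d, defined by x ≅_d y iff d(x,y) < ∞ and d(y,x) < ∞, is a congruence on X: if x ≅_d y and z ≅_d w then x ⊓ z ≅_d y ⊓ w. -/
open scoped ENNReal

/-! Invariance lets the triangle inequality route `d(x ⊓ z, y ⊓ w)` through `(x ⊓ z) ⊓ y`, and
lowering the source of a distance only shrinks it (since `d(a, b) = 0` for `a ≤ b`). Together
`d(x ⊓ z, y ⊓ w) ≤ d(x, y) + d(z, w)`, so finiteness passes to meets. -/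

namespace QuasiMetricSemilattice

variable {X : Type*} [SemilatticeInf X] {d : X → X → ℝ≥0∞}
  (hQM2 : ∀ x y z, d x z ≤ d x y + d y z) (hle : ∀ x y, x ≤ y → d x y = 0)
include hQM2 hle

theorem dist_le_of_le {a b : X} (hab : a ≤ b) (c : X) : d a c ≤ d b c :=
  calc d a c ≤ d a b + d b c := hQM2 _ _ _
    _ = d b c := by rw [hle _ _ hab, zero_add]

theorem dist_inf_inf_le (hinv : ∀ x y, d x y = d x (x ⊓ y)) (x y z w : X) :
    d (x ⊓ z) (y ⊓ w) ≤ d x y + d z w :=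
  calc d (x ⊓ z) (y ⊓ w) = d (x ⊓ z) ((x ⊓ z) ⊓ y ⊓ w) := by rw [hinv, ← inf_assoc]
    _ ≤ d (x ⊓ z) ((x ⊓ z) ⊓ y) + d ((x ⊓ z) ⊓ y) ((x ⊓ z) ⊓ y ⊓ w) := hQM2 _ _ _
    _ = d (x ⊓ z) y + d ((x ⊓ z) ⊓ y) w := by rw [← hinv, ← hinv]
    _ ≤ d x y + d z w := by
      gcongr
      · exact dist_le_of_le hQM2 hle inf_le_left y
      · exact dist_le_of_le hQM2 hle (inf_le_left.trans inf_le_right) w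

end QuasiMetricSemilattice

theorem stmt_11_general {X : Type*} [SemilatticeInf X] (d : X → X → ℝ≥0∞)
    (hQM2 : ∀ x y z, d x z ≤ d x y + d y z)
    (hcompat : ∀ x y, d x y = 0 ↔ x ≤ y)
    (hinv : ∀ x y, d x y = d x (x ⊓ y)) :
    ∀ x y z w : X, (d x y < ⊤ ∧ d y x < ⊤) → (d z w < ⊤ ∧ d w z < ⊤) →
      (d (x ⊓ z) (y ⊓ w) < ⊤ ∧ d (y ⊓ w) (x ⊓ z) < ⊤) := by
  have hle : ∀ x y, x ≤ y → d x y = 0 := fun x y => (hcompat x y).2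
  rintro x y z w ⟨hxy, hyx⟩ ⟨hzw, hwz⟩
  exact ⟨(QuasiMetricSemilattice.dist_inf_inf_le hQM2 hle hinv x y z w).trans_lt
      (ENNReal.add_lt_top.2 ⟨hxy, hzw⟩),
    (QuasiMetricSemilattice.dist_inf_inf_le hQM2 hle hinv y x w z).trans_lt
      (ENNReal.add_lt_top.2 ⟨hyx, hwz⟩)⟩

/-- On an invariant generalised quasi-metric meet-semilattice, the relation
`x ≅_d y ↔ d(x,y) < ∞ ∧ d(y,x) < ∞` is a congruence. -/
theorem stmt_11 {X : Type*} [SemilatticeInf X] [Nonempty X] (d : X → X → ℝ≥0∞)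
    (hQM1 : ∀ x y, (d x y = 0 ∧ d y x = 0) ↔ x = y)
    (hQM2 : ∀ x y z, d x z ≤ d x y + d y z)
    (hcompat : ∀ x y, d x y = 0 ↔ x ≤ y)
    (hinv : ∀ x y, d x y = d x (x ⊓ y)) :
    ∀ x y z w : X, (d x y < ⊤ ∧ d y x < ⊤) → (d z w < ⊤ ∧ d w z < ⊤) →
      (d (x ⊓ z) (y ⊓ w) < ⊤ ∧ d (y ⊓ w) (x ⊓ z) < ⊤) :=
  stmt_11_general d hQM2 hcompat hinv
end

section
/- Every weakly weighted quasi-metric space (X,d) satisfies the descending path condition (DPC): for all x,y,z ∈ X with d(y,x) = 0 and d(z,y) = 0, one has d(x,z) = d(x,y) + d(y,z). -/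
/-- Every weakly weighted quasi-metric space satisfies the descending
path condition (DPC). -/
theorem stmt_12 {X : Type*} [Nonempty X] (d : X → X → ℝ)
    (hnonneg : ∀ x y, 0 ≤ d x y)
    (hQM1 : ∀ x y, (d x y = 0 ∧ d y x = 0) ↔ x = y)
    (hQM2 : ∀ x y z, d x z ≤ d x y + d y z)
    (w : X → ℝ) (hw : ∀ x y, d x y + w x = d y x + w y) :
    ∀ x y z : X, d y x = 0 → d z y = 0 → d x z = d x y + d y z := by
  intro x y z hyx hzy
  have hzx : d z x = 0 :=
    le_antisymm (by have := hQM2 z y x; linarith) (hnonneg z x)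
  have h1 := hw x y
  have h2 := hw y z
  have h3 := hw x z
  linarith
end

section
/- Let (X,d) be an invariant quasi-metric meet-semilattice satisfying the descending path condition (DPC). Then for all x,y,z ∈ X one has w_x(y) = d(x, x ⊓ y ⊓ z) − d(y, x ⊓ y ⊓ z), where w_x(y) := d(x,y) − d(y,x). -/
/-- In an invariant quasi-metric meet-semilattice satisfying (DPC),
`w_x(y) = d(x, x ⊓ y ⊓ z) − d(y, x ⊓ y ⊓ z)` for all `x, y, z`, where
`w_x(y) := d(x,y) − d(y,x)`. -/
theorem stmt_13 {X : Type*} [SemilatticeInf X] [Nonempty X] (d : X → X → ℝ)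
    (hnonneg : ∀ x y, 0 ≤ d x y)
    (hQM1 : ∀ x y, (d x y = 0 ∧ d y x = 0) ↔ x = y)
    (hQM2 : ∀ x y z, d x z ≤ d x y + d y z)
    (hcompat : ∀ x y, d x y = 0 ↔ x ≤ y)
    (hinv : ∀ x y, d x y = d x (x ⊓ y))
    (hDPC : ∀ x y z, d y x = 0 → d z y = 0 → d x z = d x y + d y z) :
    ∀ x y z : X, d x y - d y x = d x (x ⊓ y ⊓ z) - d y (x ⊓ y ⊓ z) := by
  intro x y z
  have h1 : d (x ⊓ y) x = 0 := (hcompat _ _).2 inf_le_left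
  have h2 : d (x ⊓ y) y = 0 := (hcompat _ _).2 inf_le_right
  have h3 : d (x ⊓ y ⊓ z) (x ⊓ y) = 0 := (hcompat _ _).2 inf_le_left
  have hx : d x (x ⊓ y ⊓ z) = d x (x ⊓ y) + d (x ⊓ y) (x ⊓ y ⊓ z) :=
    hDPC _ _ _ h1 h3
  have hy : d y (x ⊓ y ⊓ z) = d y (x ⊓ y) + d (x ⊓ y) (x ⊓ y ⊓ z) :=
    hDPC _ _ _ h2 h3
  have hxy : d x y = d x (x ⊓ y) := hinv x y
  have hyx : d y x = d y (x ⊓ y) := by rw [hinv y x, inf_comm]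
  rw [hx, hy, hxy, hyx]; ring
end

section
/- Let (X,d) be an invariant quasi-metric meet-semilattice satisfying the descending path condition (DPC). Then for every x ∈ X, the function w_x : X → ℝ defined by w_x(y) = d(x,y) − d(y,x) is a weak weight for d; in particular, (X,d) is weakly weighted, and any two functions w_x, w_y differ by a constant. -/
/-- In an invariant quasi-metric meet-semilattice satisfying (DPC),
for every `x` the function `w_x(y) := d(x,y) − d(y,x)` is a weak weight for `d`
(so `(X,d)` is weakly weighted), and any two `w_x`, `w_y` differ by a constant. -/
theorem stmt_14 {X : Type*} [SemilatticeInf X] [Nonempty X] (d : X → X → ℝ)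
    (hnonneg : ∀ x y, 0 ≤ d x y)
    (hQM1 : ∀ x y, (d x y = 0 ∧ d y x = 0) ↔ x = y)
    (hQM2 : ∀ x y z, d x z ≤ d x y + d y z)
    (hcompat : ∀ x y, d x y = 0 ↔ x ≤ y)
    (hinv : ∀ x y, d x y = d x (x ⊓ y))
    (hDPC : ∀ x y z, d y x = 0 → d z y = 0 → d x z = d x y + d y z) :
    (∀ x : X, ∀ y z : X,
      d y z + (d x y - d y x) = d z y + (d x z - d z x)) ∧
    (∀ x y : X, ∃ c : ℝ, ∀ z : X, d x z - d z x = (d y z - d z y) + c) := by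
  have key : ∀ x u v : X, u ≤ v → d x u - d u x - (d x v - d v x) = d v u := by
    intro x u v huv
    set n := x ⊓ u with hn
    set p := x ⊓ v with hp
    have hnp : n ≤ p := inf_le_inf_left x huv
    have h1 : d x u = d x n := hinv x u
    have h2 : d x v = d x p := hinv x v
    have h3 : d u x = d u n := by rw [hinv u x, inf_comm u x]
    have h4 : d v x = d v p := by rw [hinv v x, inf_comm v x]
    have e1 : d x n = d x p + d p n :=
      hDPC x p n ((hcompat p x).mpr inf_le_left) ((hcompat n p).mpr hnp)
    have e2 : d v n = d v u + d u n :=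
      hDPC v u n ((hcompat u v).mpr huv) ((hcompat n u).mpr inf_le_right)
    have e3 : d v n = d v p + d p n :=
      hDPC v p n ((hcompat p v).mpr inf_le_right) ((hcompat n p).mpr hnp)
    linarith
  have cocycle : ∀ x y z : X, d y z - d z y = (d x z - d z x) - (d x y - d y x) := by
    intro x y z
    have h1 := key x (y ⊓ z) y inf_le_left
    have h2 := key x (y ⊓ z) z inf_le_right
    have hy : d y z = d y (y ⊓ z) := hinv y z
    have hz : d z y = d z (y ⊓ z) := by rw [hinv z y, inf_comm z y]
    linarith
  constructor
  · intro x y z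
    have := cocycle x y z
    linarith
  · intro x y
    refine ⟨d x y - d y x, fun z => ?_⟩
    have := cocycle x y z
    linarith
end

section
/- An invariant quasi-metric meet-semilattice (X,d) is weakly weighted if and only if it satisfies the descending path condition (DPC). -/
/-- An invariant quasi-metric meet-semilattice is weakly weighted iff
it satisfies the descending path condition (DPC). -/
theorem stmt_15 {X : Type*} [SemilatticeInf X] [Nonempty X] (d : X → X → ℝ)
    (hnonneg : ∀ x y, 0 ≤ d x y)
    (hQM1 : ∀ x y, (d x y = 0 ∧ d y x = 0) ↔ x = y)
    (hQM2 : ∀ x y z, d x z ≤ d x y + d y z)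
    (hcompat : ∀ x y, d x y = 0 ↔ x ≤ y)
    (hinv : ∀ x y, d x y = d x (x ⊓ y)) :
    (∃ w : X → ℝ, ∀ x y, d x y + w x = d y x + w y) ↔
    (∀ x y z : X, d y x = 0 → d z y = 0 → d x z = d x y + d y z) := by
  constructor
  · rintro ⟨w, hw⟩ x y z hyx hzy
    have hzx : d z x = 0 :=
      le_antisymm (by have := hQM2 z y x; linarith) (hnonneg z x)
    have h1 := hw x z
    have h2 := hw x y
    have h3 := hw y z
    rw [hzx] at h1; rw [hyx] at h2; rw [hzy] at h3
    linarith
  · intro hdpc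
    obtain ⟨o⟩ := ‹Nonempty X›
    have dpc' : ∀ u v t : X, t ≤ v → v ≤ u → d u t = d u v + d v t := fun u v t h1 h2 =>
      hdpc u v t ((hcompat v u).2 h2) ((hcompat t v).2 h1)
    refine ⟨fun x => d o (x ⊓ o) - d x (x ⊓ o), fun x y => ?_⟩
    set m := x ⊓ y with hm
    set a := x ⊓ o with ha
    set b := y ⊓ o with hb
    set c := x ⊓ y ⊓ o with hc
    have hcm : c ≤ m := inf_le_left
    have hca : c ≤ a := inf_le_inf_right o inf_le_left
    have hcb : c ≤ b := inf_le_inf_right o inf_le_right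
    have h1 : d x c = d x m + d m c := dpc' x m c hcm inf_le_left
    have h2 : d x c = d x a + d a c := dpc' x a c hca inf_le_left
    have h3 : d o c = d o a + d a c := dpc' o a c hca inf_le_right
    have h4 : d y c = d y m + d m c := dpc' y m c hcm inf_le_right
    have h5 : d o c = d o b + d b c := dpc' o b c hcb inf_le_right
    have h6 : d y c = d y b + d b c := dpc' y b c hcb inf_le_left
    have hxy : d x y = d x m := hinv x y
    have hyx : d y x = d y m := by rw [hinv y x, hm, inf_comm]
    have goal : d x y + (d o a - d x a) = d y x + (d o b - d y b) := by
      rw [hxy, hyx]; linarith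
    simpa [← ha, ← hb] using goal
end

section
/- Let (X,d) be an invariant quasi-metric meet-semilattice satisfying the descending path condition (DPC). Then the following are equivalent: (a) d is co-weighted; (b) for every x ∈ X there exists c_x ∈ ℝ such that w_x(y) ≤ c_x for all y ∈ X, where w_x(y) := d(x,y) − d(y,x); (c) there exist x ∈ X and c ∈ ℝ with w_x(y) ≤ c for all y ∈ X; (d) X is an m-space, i.e. for every x ∈ X there exists c'_x ≥ 0 such that d(x,y) ≤ c'_x for every y ∈ X with y ≤ x. -/
/-- For an invariant quasi-metric meet-semilattice satisfying (DPC),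
the following are equivalent: (a) `d` is co-weighted; (b) every `w_x` is bounded above;
(c) some `w_x` is bounded above; (d) `X` is an m-space. -/
theorem stmt_16 {X : Type*} [SemilatticeInf X] [Nonempty X] (d : X → X → ℝ)
    (hnonneg : ∀ x y, 0 ≤ d x y)
    (hQM1 : ∀ x y, (d x y = 0 ∧ d y x = 0) ↔ x = y)
    (hQM2 : ∀ x y z, d x z ≤ d x y + d y z)
    (hcompat : ∀ x y, d x y = 0 ↔ x ≤ y)
    (hinv : ∀ x y, d x y = d x (x ⊓ y))
    (hDPC : ∀ x y z, d y x = 0 → d z y = 0 → d x z = d x y + d y z) :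
    ((∃ w : X → ℝ, (∀ x, 0 ≤ w x) ∧ ∀ x y, d x y + w y = d y x + w x) ↔
      (∀ x : X, ∃ c : ℝ, ∀ y : X, d x y - d y x ≤ c)) ∧
    ((∀ x : X, ∃ c : ℝ, ∀ y : X, d x y - d y x ≤ c) ↔
      (∃ x : X, ∃ c : ℝ, ∀ y : X, d x y - d y x ≤ c)) ∧
    ((∃ x : X, ∃ c : ℝ, ∀ y : X, d x y - d y x ≤ c) ↔
      (∀ x : X, ∃ c : ℝ, 0 ≤ c ∧ ∀ y : X, y ≤ x → d x y ≤ c)) := by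
  have h0 : ∀ a b : X, a ≤ b → d a b = 0 := fun a b h => (hcompat a b).mpr h
  have diff : ∀ a b m : X, m ≤ a → m ≤ b → d a b - d b a = d a m - d b m := by
    intro a b m ha hb
    have hm : m ≤ a ⊓ b := le_inf ha hb
    have h1 : d a m = d a (a ⊓ b) + d (a ⊓ b) m :=
      hDPC a (a ⊓ b) m (h0 _ _ inf_le_left) (h0 _ _ hm)
    have h2 : d b m = d b (a ⊓ b) + d (a ⊓ b) m :=
      hDPC b (a ⊓ b) m (h0 _ _ inf_le_right) (h0 _ _ hm)
    have h3 : d a b = d a (a ⊓ b) := hinv a b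
    have h4 : d b a = d b (a ⊓ b) := by rw [hinv b a, inf_comm]
    linarith
  have cocycle : ∀ x y z : X, d x z - d z x = (d x y - d y x) + (d y z - d z y) := by
    intro x y z
    have hxz := diff x z (x ⊓ y ⊓ z) (inf_le_left.trans inf_le_left) inf_le_right
    have hxy := diff x y (x ⊓ y ⊓ z) (inf_le_left.trans inf_le_left)
      (inf_le_left.trans inf_le_right)
    have hyz := diff y z (x ⊓ y ⊓ z) (inf_le_left.trans inf_le_right) inf_le_right
    linarith
  obtain ⟨x₀⟩ := ‹Nonempty X›
  -- (c) → (b)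
  have c_to_b : (∃ x : X, ∃ c : ℝ, ∀ y : X, d x y - d y x ≤ c) →
      (∀ x : X, ∃ c : ℝ, ∀ y : X, d x y - d y x ≤ c) := by
    rintro ⟨x₁, c, hc⟩ x
    refine ⟨(d x x₁ - d x₁ x) + c, fun y => ?_⟩
    have := cocycle x x₁ y
    have := hc y
    linarith
  refine ⟨⟨?_, ?_⟩, ⟨fun hb => ⟨x₀, hb x₀⟩, c_to_b⟩, ?_, ?_⟩
  · rintro ⟨w, hw0, hw⟩ x
    exact ⟨w x, fun y => by have := hw x y; have := hw0 y; linarith⟩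
  · intro hb
    obtain ⟨c, hc⟩ := hb x₀
    refine ⟨fun x => c - (d x₀ x - d x x₀), fun x => ?_, fun x y => ?_⟩
    · have := hc x; simp only; linarith
    · have := cocycle x₀ x y; simp only; linarith
  · intro hc x
    obtain ⟨cx, hcx⟩ := c_to_b hc x
    refine ⟨max cx 0, le_max_right _ _, fun y hy => ?_⟩
    have h1 := hcx y
    have h2 : d y x = 0 := h0 _ _ hy
    have : d x y ≤ cx := by linarith
    exact this.trans (le_max_left _ _)
  · intro md
    obtain ⟨c, _, hc⟩ := md x₀
    refine ⟨x₀, c, fun y => ?_⟩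
    have h1 : d x₀ y = d x₀ (x₀ ⊓ y) := hinv x₀ y
    have h2 : d x₀ (x₀ ⊓ y) ≤ c := hc _ inf_le_left
    have := hnonneg y x₀
    linarith
end

section
/- Let (X,d) be an invariant quasi-metric meet-semilattice and let w : X → ℝ be a weak weight for d. Then w is a strictly decreasing meet co-valuation: w(x) + w(x ⊓ y ⊓ z) ≤ w(x ⊓ y) + w(x ⊓ z) for all x,y,z, and w(y) < w(x) whenever x < y. Consequently, −w is a strictly increasing meet valuation. -/
/-- On an invariant quasi-metric meet-semilattice, every weak weight `w`
is a strictly decreasing meet co-valuation; consequently `−w` is a strictly increasing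
meet valuation. -/
theorem stmt_17 {X : Type*} [SemilatticeInf X] [Nonempty X] (d : X → X → ℝ)
    (hnonneg : ∀ x y, 0 ≤ d x y)
    (hQM1 : ∀ x y, (d x y = 0 ∧ d y x = 0) ↔ x = y)
    (hQM2 : ∀ x y z, d x z ≤ d x y + d y z)
    (hcompat : ∀ x y, d x y = 0 ↔ x ≤ y)
    (hinv : ∀ x y, d x y = d x (x ⊓ y))
    (w : X → ℝ) (hw : ∀ x y, d x y + w x = d y x + w y) :
    -- `w` is a meet co-valuation
    (∀ x y z : X, w x + w (x ⊓ y ⊓ z) ≤ w (x ⊓ y) + w (x ⊓ z)) ∧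
    -- `w` is strictly decreasing
    (∀ x y : X, x < y → w y < w x) ∧
    -- `−w` is a meet valuation
    (∀ x y z : X, (-w x) + (-w (x ⊓ y ⊓ z)) ≥ (-w (x ⊓ y)) + (-w (x ⊓ z))) ∧
    -- `−w` is strictly increasing
    (∀ x y : X, x < y → -w x < -w y) := by
  have key : ∀ s t : X, s ≤ t → w s = d t s + w t := by
    intro s t h
    have h0 : d s t = 0 := (hcompat s t).2 h
    have := hw t s
    linarith
  have cov : ∀ x y z : X, w x + w (x ⊓ y ⊓ z) ≤ w (x ⊓ y) + w (x ⊓ z) := by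
    intro x y z
    have h1 := key (x ⊓ y ⊓ z) (x ⊓ y) inf_le_left
    have h2 := key (x ⊓ z) x inf_le_left
    have h3 : d (x ⊓ y) (x ⊓ y ⊓ z) = d (x ⊓ y) z := (hinv (x ⊓ y) z).symm
    have h4 : d x (x ⊓ z) = d x z := (hinv x z).symm
    have h5 : d (x ⊓ y) z ≤ d (x ⊓ y) x + d x z := hQM2 _ _ _
    have h6 : d (x ⊓ y) x = 0 := (hcompat _ _).2 inf_le_left
    linarith
  have dec : ∀ x y : X, x < y → w y < w x := by
    intro x y h
    have h1 := key x y h.le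
    have h2 : d y x ≠ 0 := by
      intro h0
      exact h.ne ((hQM1 x y).1 ⟨(hcompat x y).2 h.le, h0⟩)
    have h3 : 0 < d y x := lt_of_le_of_ne (hnonneg y x) (Ne.symm h2)
    linarith
  exact ⟨cov, dec, fun x y z => by have := cov x y z; linarith,
    fun x y h => by have := dec x y h; linarith⟩
end

section
/- Let (X, ⊓) be a meet-semilattice and f : X → ℝ a strictly decreasing meet co-valuation. Then the function d_f(x,y) := f(x ⊓ y) − f(x) is a quasi-metric on X whose specialisation order coincides with the semilattice order (d_f(x,y) = 0 iff x ≤ y), d_f is invariant (d_f(x,y) = d_f(x, x ⊓ y) for all x,y), and f is a weak weight for d_f. -/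
/-- If `f` is a strictly decreasing meet co-valuation on a
meet-semilattice `X`, then `d_f(x,y) := f(x ⊓ y) − f(x)` is a quasi-metric on `X` whose
specialisation order is the semilattice order, `d_f` is invariant, and `f` is a weak
weight for `d_f`. -/
theorem stmt_18 {X : Type*} [SemilatticeInf X] (f : X → ℝ)
    (hcoval : ∀ x y z : X, f x + f (x ⊓ y ⊓ z) ≤ f (x ⊓ y) + f (x ⊓ z))
    (hdec : ∀ x y : X, x < y → f y < f x) :
    -- `d_f` has nonnegative values
    (∀ x y : X, 0 ≤ f (x ⊓ y) - f x) ∧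
    -- (QM1)
    (∀ x y : X, ((f (x ⊓ y) - f x = 0) ∧ (f (y ⊓ x) - f y = 0)) ↔ x = y) ∧
    -- (QM2)
    (∀ x y z : X, f (x ⊓ z) - f x ≤ (f (x ⊓ y) - f x) + (f (y ⊓ z) - f y)) ∧
    -- the specialisation order of `d_f` is the semilattice order
    (∀ x y : X, f (x ⊓ y) - f x = 0 ↔ x ≤ y) ∧
    -- `d_f` is invariant
    (∀ x y : X, f (x ⊓ y) - f x = f (x ⊓ (x ⊓ y)) - f x) ∧
    -- `f` is a weak weight for `d_f`
    (∀ x y : X, (f (x ⊓ y) - f x) + f x = (f (y ⊓ x) - f y) + f y) := by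
  have hanti : ∀ x y : X, x ≤ y → f y ≤ f x := by
    intro x y h
    rcases eq_or_lt_of_le h with rfl | h
    · exact le_refl _
    · exact (hdec x y h).le
  have hspec : ∀ x y : X, f (x ⊓ y) - f x = 0 ↔ x ≤ y := by
    intro x y
    constructor
    · intro h
      by_contra hxy
      have hlt : x ⊓ y < x := lt_of_le_of_ne inf_le_left (fun he => hxy (he ▸ inf_le_right))
      have h2 := hdec _ _ hlt
      clear hxy; linarith
    · intro h
      rw [inf_eq_left.mpr h]; ring
  refine ⟨?_, ?_, ?_, hspec, ?_, ?_⟩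
  · intro x y
    have := hanti _ _ (inf_le_left : x ⊓ y ≤ x)
    linarith
  · intro x y
    constructor
    · rintro ⟨h1, h2⟩
      exact le_antisymm ((hspec x y).mp h1) ((hspec y x).mp h2)
    · rintro rfl
      simp
  · intro x y z
    have h1 := hcoval y x z
    have h2 : f (x ⊓ z) ≤ f (y ⊓ x ⊓ z) :=
      hanti _ _ (inf_le_inf_right z (inf_le_right : y ⊓ x ≤ x))
    have h3 : f (y ⊓ x) = f (x ⊓ y) := by rw [inf_comm]
    linarith
  · intro x y
    rw [← inf_assoc, inf_idem]
  · intro x y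
    rw [inf_comm x y]; ring
end

section
/- Let X be a meet-semilattice, ≅ a congruence on X, φ : X → X an endomorphism (φ(x ⊓ y) = φ(x) ⊓ φ(y) for all x,y), and x ∈ X. Then the following are equivalent: (a) x is (φ,≅)-inert, i.e. T_n(φ,x) ≅ x for every n ≥ 1; (b) x ⊓ φ^n(x) ≅ x for every n ∈ ℕ. Moreover (a) and (b) imply (c) x ⊓ φ(x) ≅ x; and if φ respects ≅ (that is, x ≅ y implies φ(x) ≅ φ(y)), then (c) implies (a) and (b) as well. -/
/-- `traj φ x n` is the `(n+1)`-st trajectory `T_{n+1}(φ,x) = x ⊓ φ(x) ⊓ ⋯ ⊓ φⁿ(x)`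
of an endomorphism `φ` of a meet-semilattice in the point `x`. -/
def traj {X : Type*} [SemilatticeInf X] (φ : X → X) (x : X) : ℕ → X
  | 0 => x
  | n + 1 => traj φ x n ⊓ φ^[n + 1] x

/-- For a meet-semilattice `X` with a congruence `≅`, an endomorphism
`φ` of `X` and `x ∈ X`, the following are equivalent:
(a) `x` is `(φ,≅)`-inert, i.e. `T_n(φ,x) ≅ x` for every `n ≥ 1`;
(b) `x ⊓ φⁿ(x) ≅ x` for every `n ∈ ℕ`.
Moreover (a)/(b) imply (c) `x ⊓ φ(x) ≅ x`, and if `φ` respects `≅` then (c) implies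
(a) and (b). -/
theorem stmt_19 {X : Type*} [SemilatticeInf X] (r : X → X → Prop)
    (hequiv : Equivalence r)
    (hcong : ∀ a b c e : X, r a b → r c e → r (a ⊓ c) (b ⊓ e))
    (φ : X → X) (hφ : ∀ a b : X, φ (a ⊓ b) = φ a ⊓ φ b) (x : X) :
    ((∀ n : ℕ, r (traj φ x n) x) ↔ (∀ n : ℕ, r (x ⊓ φ^[n] x) x)) ∧
    ((∀ n : ℕ, r (traj φ x n) x) → r (x ⊓ φ x) x) ∧
    ((∀ a b : X, r a b → r (φ a) (φ b)) →
      r (x ⊓ φ x) x → (∀ n : ℕ, r (traj φ x n) x)) := by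
  have sand : ∀ a b c : X, a ≤ b → b ≤ c → r a c → r b c := by
    intro a b c hab hbc hac
    have h1 := hcong a c b b hac (hequiv.refl b)
    rw [inf_eq_left.mpr hab, inf_eq_right.mpr hbc] at h1
    exact hequiv.trans (hequiv.symm h1) hac
  have htle : ∀ n, traj φ x n ≤ x := by
    intro n; induction n with
    | zero => exact le_rfl
    | succ n ih => exact le_trans inf_le_left ih
  have hab : (∀ n : ℕ, r (traj φ x n) x) → (∀ n : ℕ, r (x ⊓ φ^[n] x) x) := by
    intro ha n
    cases n with
    | zero => simpa using hequiv.refl x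
    | succ n =>
      refine sand (traj φ x (n+1)) (x ⊓ φ^[n+1] x) x ?_ inf_le_left (ha (n+1))
      exact le_inf (le_trans inf_le_left (htle n)) inf_le_right
  have hba : (∀ n : ℕ, r (x ⊓ φ^[n] x) x) → ∀ n : ℕ, r (traj φ x n) x := by
    intro hb n
    induction n with
    | zero => exact hequiv.refl x
    | succ n ih =>
      have heq : traj φ x (n+1) = traj φ x n ⊓ (x ⊓ φ^[n+1] x) := by
        show traj φ x n ⊓ φ^[n+1] x = _
        rw [← inf_assoc, inf_eq_left.mpr (htle n)]
      rw [heq]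
      have h2 := hcong _ _ _ _ ih (hb (n+1))
      simpa using h2
  refine ⟨⟨hab, hba⟩, fun ha => ?_, fun hresp hc => ?_⟩
  · simpa [traj] using ha 1
  · apply hba
    intro n
    induction n with
    | zero => simpa using hequiv.refl x
    | succ n ih =>
      have h1 : r (φ x ⊓ φ^[n+1] x) (φ x) := by
        have h0 := hresp _ _ ih
        rw [hφ] at h0; rwa [Function.iterate_succ_apply']
      have h2 : r (x ⊓ (φ x ⊓ φ^[n+1] x)) x :=
        hequiv.trans (hcong _ _ _ _ (hequiv.refl x) h1) hc
      refine sand _ _ _ ?_ inf_le_left h2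
      exact le_inf inf_le_left (le_trans inf_le_right inf_le_right)
end
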